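/- arXiv:1406.7612 — 2 statements merged into one kernel-verified Lean document; each statement's English description precedes it below -/
import Mathlib

section
/- (Cubic symmetric Darboux case.) Assume λ₀ = ξ₀ = ν₀ = θ₀ = ω₀ = η₀ = 0, 4μ₀² − a₀² = 0 and a₀ ≠ 0. Then v̄_{1,1} = λ₁, v̄_{3,1} = ξ₁, v̄_{5,1} = a₀ ν₁, and v̄_{7,1} = v̄_{9,1} = v̄_{11,1} = 0. If moreover λ₁ = ξ₁ = ν₁ = 0, then v̄_{1,2} = λ₂, v̄_{3,2} = ξ₂, v̄_{5,2} = a₀ ν₂, v̄_{7,2} = a₀ θ₁ ω₁, v̄_{9,2} = a₀² θ₁ η₁, and v̄_{11,2} = a₀² θ₁ (8μ₀μ₁ − 2a₀a₁). -/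
open PowerSeries

/-!
At `ε = 0` the parameters `θ, ω, η, ν` vanish, and so does the Darboux factor
`4(μ² + θ²) - a²` because `4μ₀² = a₀²`. Hence `v₇, v₉, v₁₁` are, up to a factor `a` or `a²`,
products of two series without constant term: their `ε`-coefficients vanish and their
`ε²`-coefficients are products of first-order coefficients.
-/

namespace PowerSeries

variable {R : Type*}

theorem coeff_ofNat_mul [Semiring R] (n : ℕ) [n.AtLeastTwo] (k : ℕ) (φ : R⟦X⟧) :
    coeff k ((OfNat.ofNat n : R⟦X⟧) * φ) = OfNat.ofNat n * coeff k φ := by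
  rw [← map_ofNat C n, coeff_C_mul]

theorem coeff_two_mul [CommSemiring R] (φ ψ : R⟦X⟧) :
    coeff 2 (φ * ψ) =
      coeff 2 φ * constantCoeff ψ + coeff 1 φ * coeff 1 ψ + coeff 2 ψ * constantCoeff φ := by
  rw [coeff_mul, Finset.Nat.sum_antidiagonal_eq_sum_range_succ_mk]
  simp only [Finset.sum_range_succ, Finset.sum_range_zero, Nat.sub_self,
    coeff_zero_eq_constantCoeff_apply]
  ring

end PowerSeries

theorem cubic_symmetric_darboux_general
    (lam w th a e m xi nu : PowerSeries ℝ)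
    (v1 v3 v5 v7 v9 v11 : PowerSeries ℝ)
    (hv1 : v1 = lam)
    (hv3 : v3 = xi)
    (hv5 : v5 = nu * a)
    (hv7 : v7 = w * th * a)
    (hv9 : v9 = th * a ^ 2 * e)
    (hv11 : v11 = th * (4 * (m ^ 2 + th ^ 2) - a ^ 2) * a ^ 2)
    (hnu0 : coeff 0 nu = 0)
    (hth0 : coeff 0 th = 0)
    (hw0 : coeff 0 w = 0)
    (he0 : coeff 0 e = 0)
    (hD : 4 * (coeff 0 m) ^ 2 - (coeff 0 a) ^ 2 = 0) :
    coeff 1 v1 = coeff 1 lam ∧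
    coeff 1 v3 = coeff 1 xi ∧
    coeff 1 v5 = coeff 0 a * coeff 1 nu ∧
    coeff 1 v7 = 0 ∧ coeff 1 v9 = 0 ∧ coeff 1 v11 = 0 ∧
    (coeff 1 lam = 0 → coeff 1 xi = 0 → coeff 1 nu = 0 →
      coeff 2 v1 = coeff 2 lam ∧
      coeff 2 v3 = coeff 2 xi ∧
      coeff 2 v5 = coeff 0 a * coeff 2 nu ∧
      coeff 2 v7 = coeff 0 a * coeff 1 th * coeff 1 w ∧
      coeff 2 v9 = (coeff 0 a) ^ 2 * coeff 1 th * coeff 1 e ∧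
      coeff 2 v11 = (coeff 0 a) ^ 2 * coeff 1 th
        * (8 * coeff 0 m * coeff 1 m - 2 * coeff 0 a * coeff 1 a)) := by
  subst hv1 hv3 hv5 hv7 hv9 hv11
  simp only [coeff_zero_eq_constantCoeff_apply] at hnu0 hth0 hw0 he0 hD
  set D := 4 * (m ^ 2 + th ^ 2) - a ^ 2
  have hD0 : constantCoeff D = 0 := by
    simp only [D, map_sub, map_mul, map_add, map_pow, map_ofNat, hth0]
    linear_combination hD
  have hD1 : coeff 1 D = 8 * constantCoeff m * coeff 1 m - 2 * constantCoeff a * coeff 1 a := by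
    rw [map_sub, coeff_ofNat_mul]
    simp only [map_add, pow_two, coeff_one_mul, hth0]
    ring
  refine ⟨rfl, rfl, ?_, ?_, ?_, ?_, fun _ _ hnu1 => ⟨rfl, rfl, ?v5_two, ?_, ?_, ?_⟩⟩
  all_goals simp only [coeff_zero_eq_constantCoeff_apply, pow_two, coeff_one_mul, coeff_two_mul,
    map_mul, hD0, hD1, hnu0, hth0, hw0, he0]
  case v5_two => linear_combination coeff 1 a * hnu1
  all_goals ring

/-- Cubic symmetric Darboux case. -/
theorem cubic_symmetric_darboux
    (lam w th a e m xi nu : PowerSeries ℝ)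
    (v1 v3 v5 v7 v9 v11 : PowerSeries ℝ)
    (hv1 : v1 = lam)
    (hv3 : v3 = xi)
    (hv5 : v5 = nu * a)
    (hv7 : v7 = w * th * a)
    (hv9 : v9 = th * a ^ 2 * e)
    (hv11 : v11 = th * (4 * (m ^ 2 + th ^ 2) - a ^ 2) * a ^ 2)
    (hlam0 : coeff 0 lam = 0)
    (hxi0 : coeff 0 xi = 0)
    (hnu0 : coeff 0 nu = 0)
    (hth0 : coeff 0 th = 0)
    (hw0 : coeff 0 w = 0)
    (he0 : coeff 0 e = 0)
    (hD : 4 * (coeff 0 m) ^ 2 - (coeff 0 a) ^ 2 = 0)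
    (ha0 : coeff 0 a ≠ 0) :
    coeff 1 v1 = coeff 1 lam ∧
    coeff 1 v3 = coeff 1 xi ∧
    coeff 1 v5 = coeff 0 a * coeff 1 nu ∧
    coeff 1 v7 = 0 ∧ coeff 1 v9 = 0 ∧ coeff 1 v11 = 0 ∧
    (coeff 1 lam = 0 → coeff 1 xi = 0 → coeff 1 nu = 0 →
      coeff 2 v1 = coeff 2 lam ∧
      coeff 2 v3 = coeff 2 xi ∧
      coeff 2 v5 = coeff 0 a * coeff 2 nu ∧
      coeff 2 v7 = coeff 0 a * coeff 1 th * coeff 1 w ∧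
      coeff 2 v9 = (coeff 0 a) ^ 2 * coeff 1 th * coeff 1 e ∧
      coeff 2 v11 = (coeff 0 a) ^ 2 * coeff 1 th
        * (8 * coeff 0 m * coeff 1 m - 2 * coeff 0 a * coeff 1 a)) :=
  cubic_symmetric_darboux_general lam w th a e m xi nu v1 v3 v5 v7 v9 v11 hv1 hv3 hv5 hv7 hv9 hv11
    hnu0 hth0 hw0 he0 hD
end

section
/- (Cubic linear center case.) Assume λ₀ = ξ₀ = a₀ = ν₀ = θ₀ = ω₀ = η₀ = μ₀ = 0, and moreover λ_j = ξ_j = 0 for 1 ≤ j ≤ 4, ν₁ = ν₂ = ν₃ = 0, ω₁ = ω₂ = 0, and η₁ = 0. Then v̄_{1,j} = v̄_{3,j} = v̄_{5,j} = v̄_{7,j} = v̄_{9,j} = v̄_{11,j} = 0 for all 0 ≤ j ≤ 4, and v̄_{1,5} = λ₅, v̄_{3,5} = ξ₅, v̄_{5,5} = a₁ ν₄, v̄_{7,5} = a₁ θ₁ ω₃, v̄_{9,5} = a₁² θ₁ η₂, and v̄_{11,5} = a₁² θ₁ (4(μ₁² + θ₁²) − a₁²). -/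
/-!
The hypotheses say that `λ, ξ` are divisible by `ε⁵`, `ν` by `ε⁴`, `ω` by `ε³`, `η` by `ε²` and
`a, θ, μ` by `ε`. Orders add under multiplication and the coefficient of a product at the sum of
the orders is the product of the leading coefficients, so each `v_{2j+1}` is divisible by `ε⁵` and
its `ε⁵`-coefficient is a product of the leading coefficients of its factors.
-/

open PowerSeries

namespace PowerSeries

variable {R : Type*} [CommSemiring R] {f g : R⟦X⟧} {m n : ℕ}

theorem X_pow_add_dvd_mul (hf : X ^ m ∣ f) (hg : X ^ n ∣ g) : X ^ (m + n) ∣ f * g := by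
  rw [pow_add]
  exact mul_dvd_mul hf hg

theorem coeff_add_mul_of_X_pow_dvd (hf : X ^ m ∣ f) (hg : X ^ n ∣ g) :
    coeff (m + n) (f * g) = coeff m f * coeff n g := by
  obtain ⟨f, rfl⟩ := hf
  obtain ⟨g, rfl⟩ := hg
  have hprod : X ^ m * f * (X ^ n * g) = X ^ (m + n) * (f * g) := by ring
  simp [hprod, coeff_X_pow_mul']

theorem X_pow_mul_dvd_pow (hf : X ^ m ∣ f) (k : ℕ) : X ^ (m * k) ∣ f ^ k := by
  rw [pow_mul]
  exact pow_dvd_pow_of_dvd hf k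

theorem coeff_mul_pow_of_X_pow_dvd (hf : X ^ m ∣ f) (k : ℕ) :
    coeff (m * k) (f ^ k) = coeff m f ^ k := by
  induction k with
  | zero => simp
  | succ k ih =>
    rw [pow_succ, Nat.mul_succ, coeff_add_mul_of_X_pow_dvd (X_pow_mul_dvd_pow hf k) hf, ih,
      pow_succ]

end PowerSeries

/-- Cubic linear center case (essential order 5). -/
theorem cubic_linear_center
    (lam w th a e m xi nu : PowerSeries ℝ)
    (v1 v3 v5 v7 v9 v11 : PowerSeries ℝ)
    (hv1 : v1 = lam)
    (hv3 : v3 = xi)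
    (hv5 : v5 = nu * a)
    (hv7 : v7 = w * th * a)
    (hv9 : v9 = th * a ^ 2 * e)
    (hv11 : v11 = th * (4 * (m ^ 2 + th ^ 2) - a ^ 2) * a ^ 2)
    (hlam0 : coeff 0 lam = 0)
    (hxi0 : coeff 0 xi = 0)
    (ha0 : coeff 0 a = 0)
    (hnu0 : coeff 0 nu = 0)
    (hth0 : coeff 0 th = 0)
    (hw0 : coeff 0 w = 0)
    (he0 : coeff 0 e = 0)
    (hm0 : coeff 0 m = 0)
    (hlamxi : ∀ j : ℕ, 1 ≤ j → j ≤ 4 → coeff j lam = 0 ∧ coeff j xi = 0)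
    (hnu1 : coeff 1 nu = 0) (hnu2 : coeff 2 nu = 0) (hnu3 : coeff 3 nu = 0)
    (hw1 : coeff 1 w = 0) (hw2 : coeff 2 w = 0)
    (he1 : coeff 1 e = 0) :
    (∀ j : ℕ, j ≤ 4 →
      coeff j v1 = 0 ∧ coeff j v3 = 0 ∧ coeff j v5 = 0 ∧
      coeff j v7 = 0 ∧ coeff j v9 = 0 ∧ coeff j v11 = 0) ∧
    coeff 5 v1 = coeff 5 lam ∧
    coeff 5 v3 = coeff 5 xi ∧
    coeff 5 v5 = coeff 1 a * coeff 4 nu ∧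
    coeff 5 v7 = coeff 1 a * coeff 1 th * coeff 3 w ∧
    coeff 5 v9 = (coeff 1 a) ^ 2 * coeff 1 th * coeff 2 e ∧
    coeff 5 v11 = (coeff 1 a) ^ 2 * coeff 1 th
      * (4 * ((coeff 1 m) ^ 2 + (coeff 1 th) ^ 2) - (coeff 1 a) ^ 2) := by
  have hlam : X ^ 5 ∣ lam := X_pow_dvd_iff.mpr fun j hj => by
    rcases Nat.eq_zero_or_pos j with rfl | hj0
    exacts [hlam0, (hlamxi j hj0 (by omega)).1]
  have hxi : X ^ 5 ∣ xi := X_pow_dvd_iff.mpr fun j hj => by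
    rcases Nat.eq_zero_or_pos j with rfl | hj0
    exacts [hxi0, (hlamxi j hj0 (by omega)).2]
  have ha : X ^ 1 ∣ a := X_pow_dvd_iff.mpr fun j hj => by interval_cases j; exact ha0
  have hth : X ^ 1 ∣ th := X_pow_dvd_iff.mpr fun j hj => by interval_cases j; exact hth0
  have hm : X ^ 1 ∣ m := X_pow_dvd_iff.mpr fun j hj => by interval_cases j; exact hm0
  have he : X ^ 2 ∣ e := X_pow_dvd_iff.mpr fun j hj => by
    interval_cases j; exacts [he0, he1]
  have hw : X ^ 3 ∣ w := X_pow_dvd_iff.mpr fun j hj => by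
    interval_cases j; exacts [hw0, hw1, hw2]
  have hnu : X ^ 4 ∣ nu := X_pow_dvd_iff.mpr fun j hj => by
    interval_cases j; exacts [hnu0, hnu1, hnu2, hnu3]
  have ha2 : X ^ (1 * 2) ∣ a ^ 2 := X_pow_mul_dvd_pow ha 2
  have hbracket : X ^ 2 ∣ 4 * (m ^ 2 + th ^ 2) - a ^ 2 :=
    dvd_sub (dvd_mul_of_dvd_right
      (dvd_add (X_pow_mul_dvd_pow hm 2) (X_pow_mul_dvd_pow hth 2)) _) ha2
  have hbracket2 : coeff 2 (4 * (m ^ 2 + th ^ 2) - a ^ 2)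
      = 4 * ((coeff 1 m) ^ 2 + (coeff 1 th) ^ 2) - (coeff 1 a) ^ 2 := by
    rw [map_sub, ← map_ofNat C 4, coeff_C_mul, map_add, coeff_mul_pow_of_X_pow_dvd hm 2,
      coeff_mul_pow_of_X_pow_dvd hth 2, coeff_mul_pow_of_X_pow_dvd ha 2]
  have hwth := X_pow_add_dvd_mul hw hth
  have htha2 := X_pow_add_dvd_mul hth ha2
  have hthbracket := X_pow_add_dvd_mul hth hbracket
  have low : ∀ {v : ℝ⟦X⟧}, X ^ 5 ∣ v → ∀ j ≤ 4, coeff j v = 0 :=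
    fun hv j hj => X_pow_dvd_iff.mp hv j (by omega)
  refine ⟨fun j hj => ⟨low (hv1 ▸ hlam) j hj, low (hv3 ▸ hxi) j hj,
    low (hv5 ▸ X_pow_add_dvd_mul hnu ha) j hj, low (hv7 ▸ X_pow_add_dvd_mul hwth ha) j hj,
    low (hv9 ▸ X_pow_add_dvd_mul htha2 he) j hj,
    low (hv11 ▸ X_pow_add_dvd_mul hthbracket ha2) j hj⟩,
    by rw [hv1], by rw [hv3], ?_, ?_, ?_, ?_⟩
  · rw [hv5, coeff_add_mul_of_X_pow_dvd hnu ha, mul_comm]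
  · rw [hv7, coeff_add_mul_of_X_pow_dvd hwth ha, coeff_add_mul_of_X_pow_dvd hw hth]
    ring
  · rw [hv9, coeff_add_mul_of_X_pow_dvd htha2 he, coeff_add_mul_of_X_pow_dvd hth ha2,
      coeff_mul_pow_of_X_pow_dvd ha 2]
    ring
  · rw [hv11, coeff_add_mul_of_X_pow_dvd hthbracket ha2, coeff_add_mul_of_X_pow_dvd hth hbracket,
      coeff_mul_pow_of_X_pow_dvd ha 2, hbracket2]
    ring
end
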